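/- arXiv:2009.08533 — 2 statements merged into one kernel-verified Lean document; each statement's English description precedes it below -/
import Mathlib

section
/- Let φ_n : Δ → ℝ (n ∈ ℕ) be exponentially concave functions, let v : Δ → ℝ^d, and let N ⊆ Δ be a set of (d−1)-dimensional Lebesgue measure zero such that for every x ∈ Δ∖N there exist y_n ∈ ∂φ_n(x) with y_n → v(x) as n → ∞. Then there exists an exponentially concave function φ : Δ → ℝ such that v(x) ∈ ∂φ(x) for every x ∈ Δ∖N. -/
open scoped BigOperators
open MeasureTheory Filter

/-- The open unit simplex in `ℝ^d`. -/
def openSimplex (d : ℕ) : Set (Fin d → ℝ) :=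
  {x | (∀ i, 0 < x i) ∧ ∑ i, x i = 1}

/-- A function `φ` on the open simplex is exponentially concave if `e^φ` is concave there. -/
def ExpConcave {d : ℕ} (φ : (Fin d → ℝ) → ℝ) : Prop :=
  ConcaveOn ℝ (openSimplex d) (fun x => Real.exp (φ x))

/-- The superdifferential of `φ` at `x` (relative to the open simplex). -/
def superdiff {d : ℕ} (φ : (Fin d → ℝ) → ℝ) (x : Fin d → ℝ) : Set (Fin d → ℝ) :=
  {y | ∀ q ∈ openSimplex d, φ q ≤ φ x + ∑ k, y k * (q k - x k)}

/-- The `(d-1)`-dimensional Lebesgue measure on the hyperplane `{∑ xᶦ = 1}`. -/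
noncomputable def simplexMeasure (d : ℕ) : Measure (Fin d → ℝ) :=
  Measure.map
    (fun y : Fin (d - 1) → ℝ => fun i : Fin d =>
      if h : (i : ℕ) < d - 1 then y ⟨(i : ℕ), h⟩ else 1 - ∑ j, y j)
    volume

/-!
Normalize the `φ n` to vanish at one point `x₀ ∈ Δ ∖ N`. In multiplicative form the supergradient
inequality reads `e^{φ_n q} ≤ e^{φ_n x} e^{⟨y_n, q - x⟩}`; at `x₀` it bounds `e^{φ_n}` pointwise, so
`F := liminf e^{φ_n}` is a finite nonnegative concave function with `F x₀ = 1`. Every point of the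
relatively open simplex lies inside a segment starting at `x₀`, hence `F > 0` on `Δ`. Passing to the
liminf in the same inequality at `x ∈ Δ ∖ N` gives `F q ≤ F x e^{⟨v x, q - x⟩}`, that is
`v x ∈ ∂(log F)(x)`.
-/

open Topology Real

theorem concaveOn_liminf {E ι : Type*} [AddCommMonoid E] [Module ℝ E] {l : Filter ι} [l.NeBot]
    {s : Set E} {g : ι → E → ℝ} (hg : ∀ i, ConcaveOn ℝ s (g i)) (hg0 : ∀ i x, 0 ≤ g i x)
    (hbdd : ∀ x ∈ s, IsBoundedUnder (· ≤ ·) l fun i => g i x) :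
    ConcaveOn ℝ s fun x => liminf (fun i => g i x) l := by
  have : Nonempty ι := l.nonempty_of_neBot
  have hs : Convex ℝ s := (hg (Classical.arbitrary ι)).1
  refine ⟨hs, fun x hx y hy a b ha hb hab => ?_⟩
  have smul_liminf_le : ∀ c : ℝ, 0 ≤ c → ∀ z ∈ s,
      c • liminf (fun i => g i z) l ≤ liminf (fun i => c * g i z) l := fun c hc z hz => by
    have h := le_liminf_mul (u := fun _ => c) (.of_forall fun _ => hc) isBoundedUnder_const
      (.of_forall fun i => hg0 i z) (hbdd z hz).isCoboundedUnder_ge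
    rwa [liminf_const] at h
  have hbdd_below : ∀ c : ℝ, 0 ≤ c → ∀ z, IsBoundedUnder (· ≥ ·) l fun i => c * g i z :=
    fun c hc z => isBoundedUnder_of_eventually_ge (.of_forall fun i => mul_nonneg hc (hg0 i z))
  have hbdd_above : ∀ c : ℝ, 0 ≤ c → ∀ z ∈ s, IsBoundedUnder (· ≤ ·) l fun i => c * g i z :=
    fun c hc z hz => (monotone_mul_left_of_nonneg hc).isBoundedUnder_le_comp (hbdd z hz)
  calc a • liminf (fun i => g i x) l + b • liminf (fun i => g i y) l
      ≤ liminf (fun i => a * g i x) l + liminf (fun i => b * g i y) l :=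
        add_le_add (smul_liminf_le a ha x hx) (smul_liminf_le b hb y hy)
    _ ≤ liminf (fun i => a * g i x + b * g i y) l :=
        le_liminf_add (hbdd_below a ha x) (hbdd_above a ha x hx) (hbdd_below b hb y)
          (hbdd_above b hb y hy).isCoboundedUnder_ge
    _ ≤ liminf (fun i => g i (a • x + b • y)) l :=
        liminf_le_liminf (.of_forall fun i => by simpa using (hg i).2 hx hy ha hb hab)
          (isBoundedUnder_of_eventually_ge (.of_forall fun i => add_nonneg
            (mul_nonneg ha (hg0 i x)) (mul_nonneg hb (hg0 i y))))
          (hbdd _ (hs hx hy ha hb hab)).isCoboundedUnder_ge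

section Simplex

variable {d : ℕ}

theorem convex_openSimplex (d : ℕ) : Convex ℝ (openSimplex d) := by
  intro x hx y hy a b ha hb hab
  refine ⟨fun i => convex_Ioi (0 : ℝ) (hx.1 i) (hy.1 i) ha hb hab, ?_⟩
  simp [Finset.sum_add_distrib, ← Finset.mul_sum, hx.2, hy.2, hab]

theorem exists_mem_openSimplex_mem_openSegment {x₀ x : Fin d → ℝ} (hx₀ : x₀ ∈ openSimplex d)
    (hx : x ∈ openSimplex d) : ∃ r ∈ openSimplex d, x ∈ openSegment ℝ x₀ r := by
  have hpos : ∀ᶠ ε in 𝓝 (0 : ℝ), ∀ i, 0 < x i + ε * (x i - x₀ i) := by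
    refine eventually_all.2 fun i => ?_
    have hcont : Continuous fun ε : ℝ => x i + ε * (x i - x₀ i) := by fun_prop
    exact continuousAt_const.eventually_lt hcont.continuousAt (by simpa using hx.1 i)
  obtain ⟨ε, hεx, hε : 0 < ε⟩ :=
    ((hpos.filter_mono nhdsWithin_le_nhds).and eventually_mem_nhdsWithin).exists (f := 𝓝[>] 0)
  refine ⟨x + ε • (x - x₀), ⟨hεx, ?_⟩, ε / (1 + ε), 1 / (1 + ε), by positivity, by positivity,
    by field_simp; ring, ?_⟩
  · simp [Finset.sum_add_distrib, ← Finset.mul_sum, hx.2, hx₀.2]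
  · ext i
    simp only [Pi.add_apply, Pi.smul_apply, Pi.sub_apply, smul_eq_mul]
    field_simp
    ring

theorem ConcaveOn.pos_of_mem_openSegment {E : Type*} [AddCommMonoid E] [Module ℝ E] {s : Set E}
    {f : E → ℝ} {x₀ r x : E} (hf : ConcaveOn ℝ s f) (hx₀ : x₀ ∈ s) (hr : r ∈ s)
    (hfx₀ : 0 < f x₀) (hfr : 0 ≤ f r) (hx : x ∈ openSegment ℝ x₀ r) : 0 < f x := by
  obtain ⟨a, b, ha, hb, hab, rfl⟩ := hx
  calc 0 < a • f x₀ + b • f r := add_pos_of_pos_of_nonneg (mul_pos ha hfx₀) (mul_nonneg hb.le hfr)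
    _ ≤ f (a • x₀ + b • r) := hf.2 hx₀ hr ha.le hb.le hab

theorem ConcaveOn.pos_on_openSimplex {f : (Fin d → ℝ) → ℝ} (hf : ConcaveOn ℝ (openSimplex d) f)
    (hf0 : ∀ x ∈ openSimplex d, 0 ≤ f x) {x₀ : Fin d → ℝ} (hx₀ : x₀ ∈ openSimplex d)
    (hfx₀ : 0 < f x₀) {x : Fin d → ℝ} (hx : x ∈ openSimplex d) : 0 < f x := by
  obtain ⟨r, hr, hxr⟩ := exists_mem_openSimplex_mem_openSegment hx₀ hx
  exact hf.pos_of_mem_openSegment hx₀ hr hfx₀ (hf0 r hr) hxr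

end Simplex

section Superdifferential

variable {d : ℕ} {φ : (Fin d → ℝ) → ℝ} {x y : Fin d → ℝ}

theorem mem_superdiff_iff_exp_le : y ∈ superdiff φ x ↔
    ∀ q ∈ openSimplex d, exp (φ q) ≤ exp (φ x) * exp (∑ k, y k * (q k - x k)) := by
  simp only [superdiff, ← exp_add, exp_le_exp, Set.mem_ofPred_eq]

theorem superdiff_sub_const (c : ℝ) : superdiff (fun q => φ q - c) x = superdiff φ x := by
  ext y
  simp only [superdiff, Set.mem_ofPred_eq, sub_add_eq_add_sub, sub_le_sub_iff_right]

theorem ExpConcave.sub_const (hφ : ExpConcave φ) (c : ℝ) : ExpConcave fun q => φ q - c :=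
  (hφ.smul (exp_pos (-c)).le).congr fun q _ => by
    simp only [smul_eq_mul, ← exp_add, neg_add_eq_sub]

theorem expConcave_log {F : (Fin d → ℝ) → ℝ} (hF : ConcaveOn ℝ (openSimplex d) F)
    (hFpos : ∀ x ∈ openSimplex d, 0 < F x) : ExpConcave fun q => log (F q) :=
  hF.congr fun q hq => (exp_log (hFpos q hq)).symm

theorem tendsto_exp_sum_mul_sub {ι : Type*} {l : Filter ι} {y : ι → Fin d → ℝ} {w : Fin d → ℝ}
    (hy : Tendsto y l (𝓝 w)) (q x : Fin d → ℝ) :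
    Tendsto (fun n => exp (∑ k, y n k * (q k - x k))) l (𝓝 (exp (∑ k, w k * (q k - x k)))) := by
  have hcont : Continuous fun z : Fin d → ℝ => exp (∑ k, z k * (q k - x k)) := by fun_prop
  exact hcont.continuousAt.tendsto.comp hy

end Superdifferential

section LimitOfSupergradients

variable {d : ℕ} {φ : ℕ → (Fin d → ℝ) → ℝ} {x q w : Fin d → ℝ} {y : ℕ → Fin d → ℝ}

theorem isBoundedUnder_le_exp_mul_of_tendsto (hyw : Tendsto y atTop (𝓝 w))
    (hx : IsBoundedUnder (· ≤ ·) atTop fun n => exp (φ n x)) :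
    IsBoundedUnder (· ≤ ·) atTop
      fun n => exp (φ n x) * exp (∑ k, y n k * (q k - x k)) :=
  isBoundedUnder_le_mul_of_nonneg (.of_forall fun _ => (exp_pos _).le) hx
    (.of_forall fun _ => (exp_pos _).le) (tendsto_exp_sum_mul_sub hyw q x).isBoundedUnder_le

theorem isBoundedUnder_le_exp_of_mem_superdiff (hy : ∀ n, y n ∈ superdiff (φ n) x)
    (hyw : Tendsto y atTop (𝓝 w)) (hx : IsBoundedUnder (· ≤ ·) atTop fun n => exp (φ n x))
    (hq : q ∈ openSimplex d) : IsBoundedUnder (· ≤ ·) atTop fun n => exp (φ n q) :=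
  (isBoundedUnder_le_exp_mul_of_tendsto hyw hx).mono_le
    (.of_forall fun n => mem_superdiff_iff_exp_le.1 (hy n) q hq)

theorem liminf_exp_le_liminf_mul_exp (hy : ∀ n, y n ∈ superdiff (φ n) x)
    (hyw : Tendsto y atTop (𝓝 w)) (hx : IsBoundedUnder (· ≤ ·) atTop fun n => exp (φ n x))
    (hq : q ∈ openSimplex d) :
    liminf (fun n => exp (φ n q)) atTop ≤
      liminf (fun n => exp (φ n x)) atTop * exp (∑ k, w k * (q k - x k)) :=
  calc liminf (fun n => exp (φ n q)) atTop
      ≤ liminf (fun n => exp (φ n x) * exp (∑ k, y n k * (q k - x k))) atTop :=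
        liminf_le_liminf (.of_forall fun n => mem_superdiff_iff_exp_le.1 (hy n) q hq)
          (isBoundedUnder_of_eventually_ge (.of_forall fun _ => (exp_pos _).le))
          (isBoundedUnder_le_exp_mul_of_tendsto hyw hx).isCoboundedUnder_ge
    _ ≤ limsup (fun n => exp (∑ k, y n k * (q k - x k))) atTop *
          liminf (fun n => exp (φ n x)) atTop := by
        simp_rw [mul_comm (exp (φ _ x))]
        exact liminf_mul_le (.of_forall fun _ => (exp_pos _).le)
          (tendsto_exp_sum_mul_sub hyw q x).isBoundedUnder_le (.of_forall fun _ => (exp_pos _).le)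
          hx.isCoboundedUnder_ge
    _ = liminf (fun n => exp (φ n x)) atTop * exp (∑ k, w k * (q k - x k)) := by
        rw [(tendsto_exp_sum_mul_sub hyw q x).limsup_eq, mul_comm]

end LimitOfSupergradients

theorem statement5_general {d : ℕ}
    (φ : ℕ → (Fin d → ℝ) → ℝ) (hφ : ∀ n, ExpConcave (φ n))
    (v : (Fin d → ℝ) → Fin d → ℝ)
    (N : Set (Fin d → ℝ))
    (hconv : ∀ x ∈ openSimplex d \ N, ∃ y : ℕ → Fin d → ℝ,
      (∀ n, y n ∈ superdiff (φ n) x) ∧ Tendsto y atTop (nhds (v x))) :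
    ∃ ψ : (Fin d → ℝ) → ℝ, ExpConcave ψ ∧
      ∀ x ∈ openSimplex d \ N, v x ∈ superdiff ψ x := by
  rcases (openSimplex d \ N).eq_empty_or_nonempty with hempty | ⟨x₀, hx₀⟩
  · exact ⟨0, by simpa [ExpConcave] using concaveOn_const 1 (convex_openSimplex d),
      by simp [hempty]⟩
  set φ' : ℕ → (Fin d → ℝ) → ℝ := fun n q => φ n q - φ n x₀
  have hsuper : ∀ x, ∀ y : ℕ → Fin d → ℝ, (∀ n, y n ∈ superdiff (φ n) x) →
      ∀ n, y n ∈ superdiff (φ' n) x := fun x y hy n => by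
    simpa only [φ', superdiff_sub_const] using hy n
  obtain ⟨y₀, hy₀, hy₀v⟩ := hconv x₀ hx₀
  have hbdd : ∀ q ∈ openSimplex d, IsBoundedUnder (· ≤ ·) atTop fun n => exp (φ' n q) :=
    fun q hq => isBoundedUnder_le_exp_of_mem_superdiff (hsuper x₀ y₀ hy₀) hy₀v
      (by simp [φ', isBoundedUnder_const]) hq
  set F := fun q => liminf (fun n => exp (φ' n q)) atTop
  have hF : ConcaveOn ℝ (openSimplex d) F :=
    concaveOn_liminf (fun n => (hφ n).sub_const _) (fun _ _ => (exp_pos _).le) hbdd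
  have hF0 : ∀ x ∈ openSimplex d, 0 ≤ F x := fun x hx =>
    le_liminf_of_le (hbdd x hx).isCoboundedUnder_ge (.of_forall fun _ => (exp_pos _).le)
  have hFpos : ∀ x ∈ openSimplex d, 0 < F x :=
    fun x => hF.pos_on_openSimplex hF0 hx₀.1 (by simp [F, φ'])
  refine ⟨fun q => log (F q), expConcave_log hF hFpos, fun x hx => ?_⟩
  obtain ⟨y, hy, hyv⟩ := hconv x hx
  refine mem_superdiff_iff_exp_le.2 fun q hq => ?_
  simp only [exp_log (hFpos _ hq), exp_log (hFpos _ hx.1)]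
  exact liminf_exp_le_liminf_mul_exp (hsuper x y hy) hyv (hbdd x hx.1) hq

/-- if at a.e. point of the simplex some supergradients of exponentially
concave functions `φ_n` converge to `v(x)`, then `v` is (off the null set) a supergradient
map of a single exponentially concave function. -/
theorem statement5 {d : ℕ} (hd : 2 ≤ d)
    (φ : ℕ → (Fin d → ℝ) → ℝ) (hφ : ∀ n, ExpConcave (φ n))
    (v : (Fin d → ℝ) → Fin d → ℝ)
    (N : Set (Fin d → ℝ)) (hNsub : N ⊆ openSimplex d) (hNnull : simplexMeasure d N = 0)
    (hconv : ∀ x ∈ openSimplex d \ N, ∃ y : ℕ → Fin d → ℝ,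
      (∀ n, y n ∈ superdiff (φ n) x) ∧ Tendsto y atTop (nhds (v x))) :
    ∃ ψ : (Fin d → ℝ) → ℝ, ExpConcave ψ ∧
      ∀ x ∈ openSimplex d \ N, v x ∈ superdiff ψ x :=
  statement5_general φ hφ v N hconv
end

section
/- Let φ : Δ → ℝ be exponentially concave and bounded (m ≤ φ ≤ M on Δ for some constants m, M ∈ ℝ). Let c : Δ → ℝ^{d×d} be a continuous field of symmetric positive semidefinite matrices and p : Δ → (0,∞) measurable with ∫_Δ |c_{ij}(x)| / (x^i x^j) · p(x) dx < ∞ for all i, j. Then for every ε > 0 there exist finitely many vectors w_1,…,w_n ∈ ℝ^d with strictly positive coordinates such that the function h(x) := min_{1≤k≤n} log(w_kᵀ x) satisfies ∫_Δ (∇h − ∇φ)(x)ᵀ c(x) (∇h − ∇φ)(x) p(x) dx < ε, where ∇h and ∇φ denote the gradients of h and φ, defined Lebesgue-almost everywhere on Δ since both functions are (exponentially) concave. -/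
open scoped BigOperators
open MeasureTheory

/-- `x ↦ min_{1 ≤ k ≤ n} log (w_kᵀ x)`. -/
noncomputable def minLogAffine {d n : ℕ} (w : Fin (n + 1) → Fin d → ℝ)
    (x : Fin d → ℝ) : ℝ :=
  Finset.univ.inf' Finset.univ_nonempty (fun k => Real.log (∑ i, w k i * x i))

/-!
Since `∑ qᵢ = 1` on the simplex, affine functions there are linear, so a tangent plane to the
concave function `Ψ = exp ∘ φ` at `x` is a linear form `q ↦ W ⬝ᵥ q`. Such a `W` exists by Hahn–Banach, and `exp m ≤ Ψ ≤ exp M` forces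
`0 < Wᵢ ≤ exp M / xᵢ`. For tangents `W k` at a dense sequence of points, the minima
`H n = min_{k ≤ n} W k ⬝ᵥ ·` decrease to `Ψ`, and `log H n` is a `minLogAffine`.

Normalising a tangent `W` at `x` to `W / (W ⬝ᵥ x)` gives a supergradient of its logarithm, with
coordinates in `(0, 1 / xᵢ]`. In the affine chart `y ↦ (y, 1 - ∑ y)` of the hyperplane, `Ψ` is
differentiable almost everywhere (Rademacher). At such a point the tangents of `H n` converge to
the tangent of `Ψ`: a tangent is determined by its value at `x` and by its slopes along the chart,
and these slopes are squeezed onto the derivative. The integrand therefore tends to `0` a.e.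
while being dominated by `∑ |cᵢⱼ| p / (xᵢ xⱼ)`, and dominated convergence concludes.
-/

open Filter Topology
open scoped Matrix

section General

variable {E : Type*} [NormedAddCommGroup E] [NormedSpace ℝ E]

theorem ConcaveOn.exists_le_add_clm {U : Set E} {f : E → ℝ} {y : E} (hU : IsOpen U)
    (hf : ConcaveOn ℝ U f) (hcont : ContinuousOn f U) (hy : y ∈ U) :
    ∃ L : E →L[ℝ] ℝ, ∀ z ∈ U, f z ≤ f y + L (z - y) := by
  set hyp := {p : E × ℝ | p.1 ∈ U ∧ p.2 ≤ f p.1}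
  have hsub : {p : E × ℝ | p.1 ∈ U ∧ p.2 < f p.1} ⊆ interior hyp :=
    interior_maximal (fun p hp => ⟨hp.1, hp.2.le⟩) <|
      (continuous_snd.continuousOn.prodMk (hcont.comp continuous_fst.continuousOn
        fun p hp => hp)).isOpen_inter_preimage (hU.preimage continuous_fst)
        (isOpen_lt continuous_fst continuous_snd)
  have hnot : (y, f y) ∉ interior hyp := by
    intro h
    obtain ⟨δ, hδ, hball⟩ := Metric.isOpen_iff.1 isOpen_interior _ h
    have : (y, f y + δ / 2) ∈ hyp := interior_subset <| hball <| by
      simp [Prod.dist_eq, abs_of_pos hδ, hδ]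
    linarith [this.2]
  obtain ⟨Λ, hΛ⟩ := geometric_hahn_banach_open_point hf.convex_hypograph.interior
    isOpen_interior hnot
  set c := Λ (0, 1)
  have hdec : ∀ z t, Λ (z, t) = Λ (z, 0) + t * c := fun z t => by
    rw [show (z, t) = (z, 0) + t • ((0 : E), (1 : ℝ)) by simp, map_add, map_smul, smul_eq_mul]
  have hsep : ∀ z ∈ U, ∀ t < f z, Λ (z, 0) + t * c < Λ (y, 0) + f y * c := fun z hz t ht => by
    have h := hΛ (z, t) (hsub ⟨hz, ht⟩)
    rwa [hdec z t, hdec y (f y)] at h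
  have hc : 0 < c := by nlinarith [hsep y hy (f y - 1) (by linarith)]
  refine ⟨-c⁻¹ • Λ.comp (.inl ℝ E ℝ), fun z hz => le_of_forall_lt fun t ht => ?_⟩
  have h := hsep z hz t ht
  have hL : (-c⁻¹ • Λ.comp (.inl ℝ E ℝ)) (z - y) = (Λ (y, 0) - Λ (z, 0)) / c := by
    have : ((z - y, (0 : ℝ)) : E × ℝ) = (z, 0) - (y, 0) := by simp
    rw [smul_apply, ContinuousLinearMap.comp_apply,
      ContinuousLinearMap.inl_apply, this, map_sub, smul_eq_mul]
    ring
  rw [hL, ← sub_lt_iff_lt_add', lt_div_iff₀ hc]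
  linarith

theorem eventually_lt_of_le_add_mul {ι : Type*} {l : Filter ι} {U : Set E} {f : ι → E → ℝ}
    {F : E → ℝ} {g : ι → ℝ} {y b : E} (hU : IsOpen U) (hy : y ∈ U)
    (hf : ∀ z ∈ U, Tendsto (f · z) l (𝓝 (F z))) (hF : DifferentiableAt ℝ F y)
    (hg : ∀ i t, y + t • b ∈ U → f i (y + t • b) ≤ f i y + t * g i) {a : ℝ}
    (ha : a < fderiv ℝ F y b) : ∀ᶠ i in l, a < g i := by
  have hslope : Tendsto (slope (fun t : ℝ => F (y + t • b)) 0) (𝓝[>] 0)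
      (𝓝 (fderiv ℝ F y b)) :=
    (hasDerivAt_iff_tendsto_slope.1 (hF.hasFDerivAt.hasLineDerivAt b)).mono_left
      (nhdsWithin_mono _ fun t ht => ne_of_gt ht)
  have hmem : ∀ᶠ t in 𝓝 (0 : ℝ), y + t • b ∈ U :=
    (Continuous.tendsto (by fun_prop) 0).eventually (hU.mem_nhds (by simpa using hy))
  obtain ⟨t, ⟨hat, htU⟩, ht⟩ := (((hslope.eventually (eventually_gt_nhds ha)).and
    (eventually_nhdsWithin_of_eventually_nhds hmem)).and self_mem_nhdsWithin).exists
  rw [slope_def_field, zero_smul, add_zero, sub_zero, lt_div_iff₀ ht] at hat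
  filter_upwards [((hf _ htU).sub (hf y hy)).eventually (eventually_gt_nhds hat)] with i hi
  exact lt_of_mul_lt_mul_right (by linarith [hg i t htU]) ht.le

theorem tendsto_fderiv_apply_of_le_add_mul {ι : Type*} {l : Filter ι} {U : Set E}
    {f : ι → E → ℝ} {F : E → ℝ} {g : ι → ℝ} {y b : E} (hU : IsOpen U) (hy : y ∈ U)
    (hf : ∀ z ∈ U, Tendsto (f · z) l (𝓝 (F z))) (hF : DifferentiableAt ℝ F y)
    (hg : ∀ i t, y + t • b ∈ U → f i (y + t • b) ≤ f i y + t * g i) :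
    Tendsto g l (𝓝 (fderiv ℝ F y b)) := by
  refine tendsto_order.2 ⟨fun a ha => eventually_lt_of_le_add_mul hU hy hf hF hg ha,
    fun a ha => ?_⟩
  have hneg : ∀ i t, y + t • -b ∈ U → f i (y + t • -b) ≤ f i y + t * -g i := fun i t h => by
    simpa [smul_neg, ← neg_smul] using hg i (-t) (by simpa [smul_neg, ← neg_smul] using h)
  filter_upwards [eventually_lt_of_le_add_mul hU hy hf hF hneg
    (a := -a) (by simpa using ha)] with i hi
  linarith

theorem LocallyLipschitzOn.ae_differentiableAt [MeasurableSpace E] [BorelSpace E]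
    [FiniteDimensional ℝ E] (μ : Measure E) [μ.IsAddHaarMeasure] {U : Set E}
    {f : E → ℝ} (hU : IsOpen U) (hf : LocallyLipschitzOn U f) :
    ∀ᵐ y ∂μ, y ∈ U → DifferentiableAt ℝ f y := by
  have hloc : ∀ x : U, ∃ r > 0, ∃ K, LipschitzOnWith K f (Metric.ball (x : E) r) := by
    rintro ⟨x, hx⟩
    obtain ⟨K, t, ht, hK⟩ := hf hx
    obtain ⟨r, hr, hball⟩ := Metric.mem_nhds_iff.1 (hU.nhdsWithin_eq hx ▸ ht)
    exact ⟨r, hr, K, hK.mono hball⟩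
  choose r hr K hK using hloc
  obtain ⟨S, hS, hcover⟩ := TopologicalSpace.isOpen_iUnion_countable
    (fun x : U => Metric.ball (x : E) (r x)) fun _ => Metric.isOpen_ball
  have hae : ∀ᵐ y ∂μ, ∀ x ∈ S, y ∈ Metric.ball (x : E) (r x) → DifferentiableAt ℝ f y :=
    (ae_ball_iff hS).2 fun x _ => by
      filter_upwards [(hK x).ae_differentiableWithinAt_of_mem (μ := μ)] with y hy hmem
      exact (hy hmem).differentiableAt (Metric.isOpen_ball.mem_nhds hmem)
  filter_upwards [hae] with y hy hyU
  have hy' : y ∈ ⋃ x : U, Metric.ball (x : E) (r x) :=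
    Set.mem_iUnion.2 ⟨⟨y, hyU⟩, Metric.mem_ball_self (hr ⟨y, hyU⟩)⟩
  obtain ⟨x, hx, hmem⟩ := Set.mem_iUnion₂.1 (hcover ▸ hy')
  exact hy x hx hmem

end General

theorem measurableSet_openSimplex (d : ℕ) : MeasurableSet (openSimplex d) := by
  simp only [openSimplex, Set.ofPred_and, Set.ofPred_forall]
  exact (MeasurableSet.iInter fun i => measurableSet_lt measurable_const
    (measurable_pi_apply i)).inter (measurableSet_eq_fun (by fun_prop) measurable_const)

namespace OpenSimplex

variable {e : ℕ}

def chartDirection (e : ℕ) : (Fin e → ℝ) →ₗ[ℝ] Fin (e + 1) → ℝ where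
  toFun b := Fin.snoc b (-∑ j, b j)
  map_add' b b' := by
    ext i; refine Fin.lastCases ?_ (fun j => ?_) i <;> simp [Finset.sum_add_distrib]; ring
  map_smul' t b := by
    ext i; refine Fin.lastCases ?_ (fun j => ?_) i <;> simp [Finset.mul_sum]

def chart (e : ℕ) : (Fin e → ℝ) →ᵃ[ℝ] Fin (e + 1) → ℝ where
  toFun y := Fin.snoc y (1 - ∑ j, y j)
  linear := chartDirection e
  map_vadd' y b := by
    ext i; refine Fin.lastCases ?_ (fun j => ?_) i <;>
      simp [chartDirection, Finset.sum_add_distrib]; ring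

theorem chart_linear : (chart e).linear = chartDirection e := rfl

theorem chart_apply (y : Fin e → ℝ) : chart e y = Fin.snoc y (1 - ∑ j, y j) := rfl

theorem simplexMeasure_eq_map : simplexMeasure (e + 1) = volume.map (chart e) :=
  rfl

theorem sum_chart (y : Fin e → ℝ) : ∑ i, chart e y i = 1 := by
  simp [chart_apply, Fin.sum_univ_castSucc]

theorem init_chart (y : Fin e → ℝ) : Fin.init (chart e y) = y := by
  simp [chart_apply]

theorem chart_init {x : Fin (e + 1) → ℝ} (hx : ∑ i, x i = 1) : chart e (Fin.init x) = x := by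
  conv_rhs => rw [← Fin.snoc_init_self x]
  rw [chart_apply]
  congr 1
  rw [Fin.sum_univ_castSucc] at hx
  exact (eq_sub_of_add_eq' hx).symm

theorem chart_add_smul (y b : Fin e → ℝ) (t : ℝ) :
    chart e (y + t • b) = chart e y + t • chartDirection e b := by
  simpa [add_comm, chart_linear] using (chart e).map_vadd y (t • b)

theorem dotProduct_chartDirection_single (a : Fin (e + 1) → ℝ) (j : Fin e) :
    a ⬝ᵥ chartDirection e (Pi.single j 1) = a j.castSucc - a (Fin.last e) := by
  simp [chartDirection, dotProduct, Fin.sum_univ_castSucc, Pi.single_apply, sub_eq_add_neg]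

def chartDomain (e : ℕ) : Set (Fin e → ℝ) := chart e ⁻¹' openSimplex (e + 1)

theorem isOpen_chartDomain : IsOpen (chartDomain e) := by
  have : chartDomain e = ⋂ i, {y | 0 < chart e y i} := by
    ext y; simp [chartDomain, openSimplex, sum_chart]
  rw [this]
  exact isOpen_iInter_of_finite fun i => isOpen_lt continuous_const
    ((continuous_apply i).comp (chart e).continuous_of_finiteDimensional)

theorem init_mem_chartDomain {x : Fin (e + 1) → ℝ} (hx : x ∈ openSimplex (e + 1)) :
    Fin.init x ∈ chartDomain e := by
  rwa [chartDomain, Set.mem_preimage, chart_init hx.2]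

theorem _root_.ConcaveOn.continuousOn_openSimplex {Ψ : (Fin (e + 1) → ℝ) → ℝ}
    (hΨ : ConcaveOn ℝ (openSimplex (e + 1)) Ψ) : ContinuousOn Ψ (openSimplex (e + 1)) := by
  have hF := (hΨ.comp_affineMap (chart e)).continuousOn isOpen_chartDomain
  intro x hx
  have hFx := hF.continuousAt (isOpen_chartDomain.mem_nhds (init_mem_chartDomain hx))
  exact (hFx.comp_continuousWithinAt continuous_id.finInit.continuousWithinAt).congr
    (fun q hq => by simp [chart_init hq.2]) (by simp [chart_init hx.2])

theorem ae_differentiableAt_comp_chart {Ψ : (Fin (e + 1) → ℝ) → ℝ}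
    (hΨ : ConcaveOn ℝ (openSimplex (e + 1)) Ψ) :
    ∀ᵐ x ∂simplexMeasure (e + 1), x ∈ openSimplex (e + 1) →
      DifferentiableAt ℝ (Ψ ∘ chart e) (Fin.init x) := by
  rw [simplexMeasure_eq_map, ae_map_iff (chart e).continuous_of_finiteDimensional.aemeasurable]
  · filter_upwards [((hΨ.comp_affineMap (chart e)).locallyLipschitzOn
      isOpen_chartDomain).ae_differentiableAt _ isOpen_chartDomain] with y hy
    intro hyΔ
    simpa [init_chart] using hy hyΔ
  · simp only [imp_iff_not_or, Set.ofPred_or]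
    exact (measurableSet_openSimplex _).compl.union
      (measurableSet_of_differentiableAt ℝ _ |>.preimage continuous_id.finInit.measurable)

theorem exists_dotProduct_chart_eq (c : ℝ) (L : (Fin e → ℝ) →L[ℝ] ℝ) :
    ∃ W : Fin (e + 1) → ℝ, ∀ z, W ⬝ᵥ chart e z = c + L z := by
  refine ⟨Fin.snoc (fun j => c + L (Pi.single j 1)) c, fun z => ?_⟩
  conv_rhs => rw [← Finset.univ_sum_single z]
  simp only [dotProduct, Fin.sum_univ_castSucc, chart_apply, Fin.snoc_castSucc, Fin.snoc_last,
    map_sum]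
  have hL : ∀ j, L (Pi.single j (z j)) = L (Pi.single j 1) * z j := fun j => by
    rw [mul_comm, ← smul_eq_mul, ← map_smul, ← Pi.single_smul, smul_eq_mul, mul_one]
  simp only [hL, add_mul, Finset.sum_add_distrib, ← Finset.mul_sum]
  ring

end OpenSimplex

open OpenSimplex

def IsTangentAt {d : ℕ} (Ψ : (Fin d → ℝ) → ℝ) (x W : Fin d → ℝ) : Prop :=
  (∀ q ∈ openSimplex d, Ψ q ≤ W ⬝ᵥ q) ∧ W ⬝ᵥ x = Ψ x

theorem ConcaveOn.exists_isTangentAt {e : ℕ} {Ψ : (Fin (e + 1) → ℝ) → ℝ}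
    {x : Fin (e + 1) → ℝ} (hΨ : ConcaveOn ℝ (openSimplex (e + 1)) Ψ)
    (hx : x ∈ openSimplex (e + 1)) :
    ∃ W, IsTangentAt Ψ x W := by
  have hF := hΨ.comp_affineMap (chart e)
  obtain ⟨L, hL⟩ := hF.exists_le_add_clm isOpen_chartDomain
    (hF.continuousOn isOpen_chartDomain) (init_mem_chartDomain hx)
  obtain ⟨W, hW⟩ := exists_dotProduct_chart_eq (Ψ x - L (Fin.init x)) L
  refine ⟨W, fun q hq => ?_, ?_⟩
  · have h := hL _ (init_mem_chartDomain hq)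
    simp only [Function.comp_apply, chart_init hq.2, chart_init hx.2, map_sub] at h
    have hWq := hW (Fin.init q)
    rw [chart_init hq.2] at hWq
    linarith
  · have hWx := hW (Fin.init x)
    rw [chart_init hx.2] at hWx
    linarith

section Tangent

variable {d : ℕ} {Ψ : (Fin d → ℝ) → ℝ} {x W : Fin d → ℝ}

theorem le_apply_of_forall_le_dotProduct {c : ℝ} (h : ∀ q ∈ openSimplex d, c ≤ W ⬝ᵥ q)
    (i : Fin d) : c ≤ W i := by
  -- `q s` moves inside `openSimplex d` towards the vertex `Pi.single i 1` as `s → 0`.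
  set q : ℝ → Fin d → ℝ := fun s => (1 - s) • Pi.single i 1 + s • fun _ => (d : ℝ)⁻¹
  have hd : (0 : ℝ) < d := Nat.cast_pos.2 (Fin.pos i)
  have hq : ∀ s ∈ Set.Ioo (0 : ℝ) 1, q s ∈ openSimplex d := by
    rintro s ⟨hs0, hs1⟩
    refine ⟨fun j => ?_, ?_⟩
    · simp only [q, Pi.add_apply, Pi.smul_apply, smul_eq_mul]
      exact add_pos_of_nonneg_of_pos (mul_nonneg (sub_nonneg.2 hs1.le)
        ((Pi.single_nonneg.2 zero_le_one : (0 : Fin d → ℝ) ≤ Pi.single i 1) j)) (by positivity)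
    · simp [q, Finset.sum_add_distrib, ← Finset.mul_sum, Finset.sum_pi_single']
      field_simp
      ring
  have hlim : Tendsto (fun s => W ⬝ᵥ q s) (𝓝[>] 0) (𝓝 (W i)) := by
    have : Continuous fun s => W ⬝ᵥ q s := by fun_prop
    simpa [q] using (this.tendsto 0).mono_left nhdsWithin_le_nhds
  exact ge_of_tendsto hlim <|
    eventually_of_mem (Ioo_mem_nhdsGT one_pos) fun s hs => h _ (hq s hs)

theorem IsTangentAt.congr {Ψ' : (Fin d → ℝ) → ℝ} (h : IsTangentAt Ψ x W)
    (hx : x ∈ openSimplex d) (hΨ : Set.EqOn Ψ Ψ' (openSimplex d)) : IsTangentAt Ψ' x W :=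
  ⟨fun q hq => hΨ hq ▸ h.1 q hq, hΨ hx ▸ h.2⟩

theorem IsTangentAt.le_apply (h : IsTangentAt Ψ x W) {c : ℝ}
    (hc : ∀ q ∈ openSimplex d, c ≤ Ψ q) (i : Fin d) : c ≤ W i :=
  le_apply_of_forall_le_dotProduct (fun q hq => (hc q hq).trans (h.1 q hq)) i

theorem IsTangentAt.apply_le (h : IsTangentAt Ψ x W) (hx : x ∈ openSimplex d)
    (hW : ∀ i, 0 ≤ W i) (i : Fin d) : W i ≤ Ψ x / x i := by
  rw [le_div_iff₀ (hx.1 i), ← h.2]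
  exact Finset.single_le_sum (fun j _ => mul_nonneg (hW j) (hx.1 j).le) (Finset.mem_univ i)

theorem IsTangentAt.dotProduct_le (h : IsTangentAt Ψ x W) {B : ℝ} (hW : ∀ i, 0 ≤ W i)
    (hWB : ∀ i, W i ≤ B / x i) (q : Fin d → ℝ) :
    W ⬝ᵥ q ≤ Ψ x + ∑ i, B / x i * |q i - x i| := by
  have : W ⬝ᵥ q = W ⬝ᵥ x + ∑ i, W i * (q i - x i) := by
    simp [dotProduct, mul_sub, Finset.sum_sub_distrib]
  rw [this, h.2]
  exact add_le_add_right (Finset.sum_le_sum fun i _ =>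
    (mul_le_mul_of_nonneg_left (le_abs_self _) (hW i)).trans
      (mul_le_mul_of_nonneg_right (hWB i) (abs_nonneg _))) _

theorem IsTangentAt.inv_smul_mem_superdiff {f : (Fin d → ℝ) → ℝ}
    (h : IsTangentAt (fun q => Real.exp (f q)) x W) : (W ⬝ᵥ x)⁻¹ • W ∈ superdiff f x := by
  intro q hq
  have hx0 : 0 < W ⬝ᵥ x := h.2 ▸ Real.exp_pos _
  have hq0 : 0 < W ⬝ᵥ q := (Real.exp_pos _).trans_le (h.1 q hq)
  have hfq : f q ≤ Real.log (W ⬝ᵥ q) := by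
    rw [← Real.log_exp (f q)]; exact Real.log_le_log (Real.exp_pos _) (h.1 q hq)
  have hfx : f x = Real.log (W ⬝ᵥ x) := by rw [h.2, Real.log_exp]
  have hsum : ∑ k, ((W ⬝ᵥ x)⁻¹ • W) k * (q k - x k) = W ⬝ᵥ q / W ⬝ᵥ x - 1 := by
    simp only [Pi.smul_apply, smul_eq_mul, mul_assoc, ← Finset.mul_sum, mul_sub,
      Finset.sum_sub_distrib]
    field_simp
    rfl
  have hlog := Real.log_le_sub_one_of_pos (div_pos hq0 hx0)
  rw [Real.log_div hq0.ne' hx0.ne'] at hlog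
  rw [hsum]
  linarith

theorem dotProduct_pos_of_mem_openSimplex (hW : ∀ i, 0 < W i) (hx : x ∈ openSimplex d) :
    0 < W ⬝ᵥ x :=
  Finset.sum_pos (fun j _ => mul_pos (hW j) (hx.1 j))
    (Finset.nonempty_of_sum_ne_zero (hx.2.symm ▸ one_ne_zero))

theorem inv_dotProduct_smul_apply_mem_Ioc (hW : ∀ i, 0 < W i) (hx : x ∈ openSimplex d)
    (i : Fin d) : ((W ⬝ᵥ x)⁻¹ • W) i ∈ Set.Ioc 0 (x i)⁻¹ := by
  have hWx := dotProduct_pos_of_mem_openSimplex hW hx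
  have hi : W i * x i ≤ W ⬝ᵥ x :=
    Finset.single_le_sum (fun j _ => (mul_pos (hW j) (hx.1 j)).le) (Finset.mem_univ i)
  refine ⟨by simpa using mul_pos (inv_pos.2 hWx) (hW i), ?_⟩
  rwa [Pi.smul_apply, smul_eq_mul, inv_mul_le_iff₀ hWx, ← div_eq_mul_inv, le_div_iff₀ (hx.1 i)]

end Tangent

theorem ConcaveOn.exists_isTangentAt_forall {e : ℕ} {Ψ : (Fin (e + 1) → ℝ) → ℝ}
    (hΨ : ConcaveOn ℝ (openSimplex (e + 1)) Ψ) {a b : ℝ} (ha : 0 < a)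
    (hab : ∀ q ∈ openSimplex (e + 1), a ≤ Ψ q ∧ Ψ q ≤ b) :
    ∃ W : (Fin (e + 1) → ℝ) → Fin (e + 1) → ℝ, ∀ x ∈ openSimplex (e + 1),
      IsTangentAt Ψ x (W x) ∧ ∀ i, 0 < W x i ∧ W x i ≤ b / x i := by
  choose! W hW using fun x (hx : x ∈ openSimplex (e + 1)) => hΨ.exists_isTangentAt hx
  refine ⟨W, fun x hx => ⟨hW x hx, fun i => ?_⟩⟩
  have hpos : ∀ j, 0 < W x j := fun j =>
    ha.trans_le ((hW x hx).le_apply (fun q hq => (hab q hq).1) j)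
  exact ⟨hpos i, ((hW x hx).apply_le hx (fun j => (hpos j).le) i).trans
    (div_le_div_of_nonneg_right (hab x hx).2 (hx.1 i).le)⟩

theorem exists_denseRange_openSimplex (e : ℕ) :
    ∃ xs : ℕ → openSimplex (e + 1), DenseRange xs := by
  have : Nonempty (openSimplex (e + 1)) :=
    ⟨⟨fun _ => ((e : ℝ) + 1)⁻¹, fun _ => by positivity, by simp; field_simp⟩⟩
  exact TopologicalSpace.exists_dense_seq _

section MinDot

variable {d : ℕ} (V : ℕ → Fin d → ℝ)

theorem exists_argmin_dotProduct (n : ℕ) (q : Fin d → ℝ) :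
    ∃ k, k ≤ n ∧ ∀ j ≤ n, V k ⬝ᵥ q ≤ V j ⬝ᵥ q := by
  obtain ⟨k, hk, hmin⟩ := (Finset.range (n + 1)).exists_min_image (fun k => V k ⬝ᵥ q)
    Finset.nonempty_range_add_one
  exact ⟨k, Nat.lt_succ_iff.1 (Finset.mem_range.1 hk),
    fun j hj => hmin j (Finset.mem_range.2 (Nat.lt_succ_of_le hj))⟩

-- `Nat.find` makes the minimising index, hence the selected supergradient, measurable in `q`.
open Classical in
noncomputable def argminDot (n : ℕ) (q : Fin d → ℝ) : ℕ :=
  Nat.find (exists_argmin_dotProduct V n q)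

noncomputable def minDot (n : ℕ) (q : Fin d → ℝ) : ℝ := V (argminDot V n q) ⬝ᵥ q

variable {V}

theorem argminDot_le (n : ℕ) (q : Fin d → ℝ) : argminDot V n q ≤ n := by
  classical exact (Nat.find_spec (exists_argmin_dotProduct V n q)).1

theorem minDot_le {n k : ℕ} (hk : k ≤ n) (q : Fin d → ℝ) : minDot V n q ≤ V k ⬝ᵥ q := by
  classical exact (Nat.find_spec (exists_argmin_dotProduct V n q)).2 k hk

theorem measurable_argminDot_apply {β : Type*} [MeasurableSpace β]
    {f : ℕ → (Fin d → ℝ) → β} (hf : ∀ k, Measurable (f k)) (n : ℕ) :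
    Measurable fun q => f (argminDot V n q) q := by
  classical
  refine Measurable.find hf (fun k => ?_) (exists_argmin_dotProduct V n)
  simp only [Set.ofPred_and, Set.ofPred_forall]
  exact (MeasurableSet.const _).inter (MeasurableSet.iInter fun j => MeasurableSet.iInter fun _ =>
    measurableSet_le (by fun_prop) (by fun_prop))

theorem isTangentAt_minDot (n : ℕ) (x : Fin d → ℝ) :
    IsTangentAt (minDot V n) x (V (argminDot V n x)) :=
  ⟨fun q _ => minDot_le (argminDot_le n x) q, rfl⟩

theorem minLogAffine_eq_log_minDot {n : ℕ} {q : Fin d → ℝ} (hV : ∀ k, 0 < V k ⬝ᵥ q) :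
    minLogAffine (fun k : Fin (n + 1) => V k) q = Real.log (minDot V n q) := by
  refine le_antisymm (Finset.inf'_le _ (Finset.mem_univ
    (⟨_, Nat.lt_succ_of_le (argminDot_le n q)⟩ : Fin (n + 1))))
    (Finset.le_inf' _ _ fun k _ => Real.log_le_log (hV _) (minDot_le (Nat.lt_succ_iff.1 k.2) q))

theorem inv_smul_mem_superdiff_minLogAffine {n : ℕ} {x : Fin d → ℝ} (hV : ∀ k i, 0 < V k i)
    (hx : x ∈ openSimplex d) :
    (minDot V n x)⁻¹ • V (argminDot V n x) ∈
      superdiff (minLogAffine fun k : Fin (n + 1) => V k) x := by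
  have hpos : ∀ q ∈ openSimplex d, ∀ k, 0 < V k ⬝ᵥ q := fun q hq k =>
    dotProduct_pos_of_mem_openSimplex (hV k) hq
  refine IsTangentAt.inv_smul_mem_superdiff ((isTangentAt_minDot n x).congr hx fun q hq => ?_)
  rw [minLogAffine_eq_log_minDot (hpos q hq)]
  exact (Real.exp_log (hpos q hq _)).symm

end MinDot

theorem tendsto_minDot {d : ℕ} {Ψ : (Fin d → ℝ) → ℝ} {V : ℕ → Fin d → ℝ}
    {xs : ℕ → openSimplex d} {B : ℝ} {q : Fin d → ℝ} (hΨ : ContinuousOn Ψ (openSimplex d))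
    (hxs : DenseRange xs) (hV : ∀ k, IsTangentAt Ψ (xs k) (V k)) (hV0 : ∀ k i, 0 ≤ V k i)
    (hVB : ∀ k i, V k i ≤ B / (xs k : Fin d → ℝ) i) (hq : q ∈ openSimplex d) :
    Tendsto (fun n => minDot V n q) atTop (𝓝 (Ψ q)) := by
  refine tendsto_order.2 ⟨fun a ha => Eventually.of_forall fun n => ha.trans_le ((hV _).1 q hq),
    fun a ha => ?_⟩
  set g : (Fin d → ℝ) → ℝ := fun x => Ψ x + ∑ i, B / x i * |q i - x i|
  have hg : ContinuousWithinAt g (openSimplex d) q := by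
    have : ContinuousAt (fun x : Fin d → ℝ => ∑ i, B / x i * |q i - x i|) q :=
      tendsto_finsetSum _ fun i _ => (continuousAt_const.div (continuous_apply i).continuousAt
        (hq.1 i).ne').mul (continuousAt_const.sub (continuous_apply i).continuousAt).abs
    exact (hΨ q hq).add this.continuousWithinAt
  have hgq : g q = Ψ q := by simp [g]
  obtain ⟨k, hk⟩ := hxs.mem_nhds <|
    ((continuousWithinAt_iff_continuousAt_domRestrict g hq).1 hg).eventually
      (eventually_lt_nhds (hgq ▸ ha))
  filter_upwards [eventually_ge_atTop k] with n hn
  exact ((minDot_le hn q).trans ((hV k).dotProduct_le (hV0 k) (hVB k) q)).trans_lt hk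

theorem tendsto_of_tendsto_sub_of_tendsto_dotProduct {n ι : Type*} [Fintype n] {l : Filter ι}
    {a : ι → n → ℝ} {b x : n → ℝ} (hx : ∑ i, x i = 1) (i₀ : n)
    (hsub : ∀ i, Tendsto (fun n => a n i - a n i₀) l (𝓝 (b i - b i₀)))
    (hdot : Tendsto (fun n => a n ⬝ᵥ x) l (𝓝 (b ⬝ᵥ x))) : Tendsto a l (𝓝 b) := by
  have key : ∀ c : n → ℝ, ∀ i, c i = (c i - c i₀) + c ⬝ᵥ x - ∑ j, x j * (c j - c i₀) := by
    intro c i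
    simp only [mul_sub, Finset.sum_sub_distrib, ← Finset.sum_mul, hx, dotProduct]
    simp only [mul_comm (x _)]
    ring
  refine tendsto_pi_nhds.2 fun i => ?_
  refine Tendsto.congr (fun n => (key (a n) i).symm) ?_
  rw [key b i]
  exact ((hsub i).add hdot).sub (tendsto_finsetSum _ fun j _ => (hsub j).const_mul _)

section Differentiable

variable {e : ℕ} {ι : Type*} {l : Filter ι} {Ψ : (Fin (e + 1) → ℝ) → ℝ}
  {H : ι → (Fin (e + 1) → ℝ) → ℝ} {a : ι → Fin (e + 1) → ℝ} {x : Fin (e + 1) → ℝ}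

theorem tendsto_sub_last_of_isTangentAt (hx : x ∈ openSimplex (e + 1))
    (hdiff : DifferentiableAt ℝ (Ψ ∘ chart e) (Fin.init x))
    (hH : ∀ q ∈ openSimplex (e + 1), Tendsto (H · q) l (𝓝 (Ψ q)))
    (ha : ∀ n, IsTangentAt (H n) x (a n)) (j : Fin e) :
    Tendsto (fun n => a n j.castSucc - a n (Fin.last e)) l
      (𝓝 (fderiv ℝ (Ψ ∘ chart e) (Fin.init x) (Pi.single j 1))) := by
  refine tendsto_fderiv_apply_of_le_add_mul (f := fun n => H n ∘ chart e) isOpen_chartDomain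
    (init_mem_chartDomain hx) (fun z hz => hH _ hz) hdiff fun n t ht => ?_
  refine ((ha n).1 _ ht).trans_eq ?_
  rw [chart_add_smul, dotProduct_add, dotProduct_smul, dotProduct_chartDirection_single,
    Function.comp_apply, chart_init hx.2, (ha n).2, smul_eq_mul]

theorem tendsto_of_isTangentAt {b : Fin (e + 1) → ℝ} (hx : x ∈ openSimplex (e + 1))
    (hdiff : DifferentiableAt ℝ (Ψ ∘ chart e) (Fin.init x))
    (hH : ∀ q ∈ openSimplex (e + 1), Tendsto (H · q) l (𝓝 (Ψ q)))
    (ha : ∀ n, IsTangentAt (H n) x (a n)) (hb : IsTangentAt Ψ x b) : Tendsto a l (𝓝 b) := by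
  -- The constant family `Ψ` identifies the slopes of `b` with the derivative.
  have hb' : ∀ j : Fin e, b j.castSucc - b (Fin.last e) =
      fderiv ℝ (Ψ ∘ chart e) (Fin.init x) (Pi.single j 1) := fun j =>
    tendsto_nhds_unique tendsto_const_nhds <| tendsto_sub_last_of_isTangentAt (l := atTop)
      (H := fun _ : ℕ => Ψ) hx hdiff (fun _ _ => tendsto_const_nhds) (fun _ => hb) j
  refine tendsto_of_tendsto_sub_of_tendsto_dotProduct hx.2 (Fin.last e) (fun i => ?_) ?_
  · refine Fin.lastCases ?_ (fun j => ?_) i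
    · simpa using tendsto_const_nhds
    · exact hb' j ▸ tendsto_sub_last_of_isTangentAt hx hdiff hH ha j
  · simpa [(ha _).2, hb.2] using hH x hx

theorem tendsto_inv_dotProduct_smul_of_isTangentAt {b : Fin (e + 1) → ℝ}
    (hx : x ∈ openSimplex (e + 1)) (hdiff : DifferentiableAt ℝ (Ψ ∘ chart e) (Fin.init x))
    (hH : ∀ q ∈ openSimplex (e + 1), Tendsto (H · q) l (𝓝 (Ψ q)))
    (ha : ∀ n, IsTangentAt (H n) x (a n)) (hb : IsTangentAt Ψ x b) (hb0 : b ⬝ᵥ x ≠ 0) :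
    Tendsto (fun n => (a n ⬝ᵥ x)⁻¹ • a n) l (𝓝 ((b ⬝ᵥ x)⁻¹ • b)) :=
  have h := tendsto_of_isTangentAt hx hdiff hH ha hb
  ((((continuous_id.dotProduct continuous_const).tendsto _).comp h).inv₀ hb0).smul h

end Differentiable

theorem abs_sum_sum_mul_mul_le {ι : Type*} [Fintype ι] {δ r : ι → ℝ} (C : ι → ι → ℝ)
    (hδ : ∀ i, |δ i| ≤ r i) :
    |∑ i, ∑ j, δ i * C i j * δ j| ≤ ∑ i, ∑ j, r i * |C i j| * r j := by
  calc |∑ i, ∑ j, δ i * C i j * δ j|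
      ≤ ∑ i, ∑ j, |δ i * C i j * δ j| :=
        (Finset.abs_sum_le_sum_abs _ _).trans
          (Finset.sum_le_sum fun i _ => Finset.abs_sum_le_sum_abs _ _)
    _ ≤ ∑ i, ∑ j, r i * |C i j| * r j := by
        gcongr with i _ j _
        rw [abs_mul, abs_mul]
        have := (abs_nonneg _).trans (hδ i)
        gcongr
        exacts [hδ i, hδ j]

theorem abs_sum_sum_sub_mul_mul_sub_le {ι : Type*} [Fintype ι] {x u v : ι → ℝ}
    (C : ι → ι → ℝ) (hu : ∀ i, u i ∈ Set.Ioc 0 (x i)⁻¹) (hv : ∀ i, v i ∈ Set.Ioc 0 (x i)⁻¹) :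
    |∑ i, ∑ j, (u i - v i) * C i j * (u j - v j)| ≤ ∑ i, ∑ j, |C i j| / (x i * x j) := by
  refine (abs_sum_sum_mul_mul_le C fun i =>
    abs_sub_le_of_nonneg_of_le (hu i).1.le (hu i).2 (hv i).1.le (hv i).2).trans_eq ?_
  congr! 2
  field_simp

theorem exists_integral_lt_of_tendsto_ae {d : ℕ} {μ : Measure (Fin d → ℝ)}
    {c : Fin d → Fin d → (Fin d → ℝ) → ℝ} {p : (Fin d → ℝ) → ℝ}
    {u : ℕ → (Fin d → ℝ) → Fin d → ℝ} {v : (Fin d → ℝ) → Fin d → ℝ}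
    (hc : ∀ i j, ContinuousOn (c i j) (openSimplex d)) (hpmeas : Measurable p)
    (hp : ∀ x ∈ openSimplex d, 0 ≤ p x)
    (hint : ∀ i j, IntegrableOn
      (fun x => |c i j x| / (x i * x j) * p x) (openSimplex d) μ)
    (hu_meas : ∀ n, AEMeasurable (u n) (μ.restrict (openSimplex d)))
    (hu : ∀ n, ∀ x ∈ openSimplex d, ∀ i, u n x i ∈ Set.Ioc 0 (x i)⁻¹)
    (hv : ∀ x ∈ openSimplex d, ∀ i, v x i ∈ Set.Ioc 0 (x i)⁻¹)
    (hlim : ∀ᵐ x ∂μ, x ∈ openSimplex d → Tendsto (u · x) atTop (𝓝 (v x)))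
    {ε : ℝ} (hε : 0 < ε) :
    ∃ n, IntegrableOn
        (fun x => (∑ i, ∑ j, (u n x i - v x i) * c i j x * (u n x j - v x j)) * p x)
        (openSimplex d) μ ∧
      ∫ x in openSimplex d,
        (∑ i, ∑ j, (u n x i - v x i) * c i j x * (u n x j - v x j)) * p x ∂μ < ε := by
  have hΔ := measurableSet_openSimplex d
  set G : ℕ → (Fin d → ℝ) → ℝ :=
    fun n x => (∑ i, ∑ j, (u n x i - v x i) * c i j x * (u n x j - v x j)) * p x
  set B : (Fin d → ℝ) → ℝ := fun x => ∑ i, ∑ j, |c i j x| / (x i * x j) * p x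
  have hB : Integrable B (μ.restrict (openSimplex d)) :=
    integrable_finsetSum _ fun i _ => integrable_finsetSum _ fun j _ => hint i j
  have hbound : ∀ n, ∀ᵐ x ∂μ.restrict (openSimplex d), ‖G n x‖ ≤ B x := fun n => by
    filter_upwards [ae_restrict_mem hΔ] with x hx
    calc ‖G n x‖ = |∑ i, ∑ j, (u n x i - v x i) * c i j x * (u n x j - v x j)| * p x := by
          rw [Real.norm_eq_abs, abs_mul, abs_of_nonneg (hp x hx)]
      _ ≤ (∑ i, ∑ j, |c i j x| / (x i * x j)) * p x :=
          mul_le_mul_of_nonneg_right (abs_sum_sum_sub_mul_mul_sub_le _ (hu n x hx) (hv x hx))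
            (hp x hx)
      _ = B x := by simp only [B, Finset.sum_mul]
  have hvmeas : AEMeasurable v (μ.restrict (openSimplex d)) :=
    aemeasurable_of_tendsto_metrizable_ae' hu_meas ((ae_restrict_iff' hΔ).2 hlim)
  have hGmeas : ∀ n, AEStronglyMeasurable (G n) (μ.restrict (openSimplex d)) := fun n => by
    have := fun i j => (hc i j).aemeasurable (μ := μ) hΔ
    have := hu_meas n
    fun_prop
  have hlim0 : ∀ᵐ x ∂μ.restrict (openSimplex d), Tendsto (G · x) atTop (𝓝 0) := by
    filter_upwards [(ae_restrict_iff' hΔ).2 hlim] with x hx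
    have h := tendsto_pi_nhds.1 hx
    simpa [G] using (tendsto_finsetSum _ fun i _ => tendsto_finsetSum _ fun j _ =>
      (((h i).sub_const (v x i)).mul_const (c i j x)).mul ((h j).sub_const (v x j))).mul_const
        (p x)
  have hG := tendsto_integral_of_dominated_convergence B hGmeas hB hbound hlim0
  rw [integral_zero] at hG
  obtain ⟨n, hn⟩ := (hG.eventually (eventually_lt_nhds hε)).exists
  exact ⟨n, hB.mono' (hGmeas n) (hbound n), hn⟩

theorem statement9_general {d : ℕ} (hd : 2 ≤ d)
    (φ : (Fin d → ℝ) → ℝ) (hφ : ExpConcave φ)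
    (m M : ℝ) (hbound : ∀ x ∈ openSimplex d, m ≤ φ x ∧ φ x ≤ M)
    (c : Fin d → Fin d → (Fin d → ℝ) → ℝ)
    (hccont : ∀ i j, ContinuousOn (c i j) (openSimplex d))
    (p : (Fin d → ℝ) → ℝ) (hpmeas : Measurable p)
    (hppos : ∀ x ∈ openSimplex d, 0 < p x)
    (hint : ∀ i j, IntegrableOn
      (fun x => |c i j x| / (x i * x j) * p x) (openSimplex d) (simplexMeasure d))
    (ε : ℝ) (hε : 0 < ε) :
    ∃ (n : ℕ) (w : Fin (n + 1) → Fin d → ℝ), (∀ k i, 0 < w k i) ∧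
      ∃ u v : (Fin d → ℝ) → Fin d → ℝ,
        (∀ x ∈ openSimplex d, u x ∈ superdiff (minLogAffine w) x) ∧
        (∀ x ∈ openSimplex d, v x ∈ superdiff φ x) ∧
        IntegrableOn
          (fun x => (∑ i, ∑ j, (u x i - v x i) * c i j x * (u x j - v x j)) * p x)
          (openSimplex d) (simplexMeasure d) ∧
        (∫ x in openSimplex d,
            (∑ i, ∑ j, (u x i - v x i) * c i j x * (u x j - v x j)) * p x
            ∂(simplexMeasure d)) < ε := by
  obtain ⟨e, rfl⟩ : ∃ e, d = e + 1 := ⟨d - 1, by omega⟩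
  obtain ⟨W, hW⟩ := hφ.exists_isTangentAt_forall (Real.exp_pos m) fun q hq =>
    ⟨Real.exp_le_exp.2 (hbound q hq).1, Real.exp_le_exp.2 (hbound q hq).2⟩
  obtain ⟨xs, hxs⟩ := exists_denseRange_openSimplex e
  set V : ℕ → Fin (e + 1) → ℝ := fun k => W (xs k)
  have hVpos : ∀ k i, 0 < V k i := fun k i => ((hW _ (xs k).2).2 i).1
  have hH : ∀ q ∈ openSimplex (e + 1), Tendsto (minDot V · q) atTop (𝓝 (Real.exp (φ q))) :=
    fun q hq => tendsto_minDot hφ.continuousOn_openSimplex hxs (fun k => (hW _ (xs k).2).1)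
      (fun k i => (hVpos k i).le) (fun k i => ((hW _ (xs k).2).2 i).2) hq
  have hlim : ∀ᵐ x ∂simplexMeasure (e + 1), x ∈ openSimplex (e + 1) →
      Tendsto (fun n => (minDot V n x)⁻¹ • V (argminDot V n x)) atTop
        (𝓝 ((W x ⬝ᵥ x)⁻¹ • W x)) := by
    filter_upwards [ae_differentiableAt_comp_chart hφ] with x hdiff hx
    exact tendsto_inv_dotProduct_smul_of_isTangentAt hx (hdiff hx) hH (isTangentAt_minDot · x)
      (hW x hx).1 (dotProduct_pos_of_mem_openSimplex (fun i => ((hW x hx).2 i).1) hx).ne'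
  obtain ⟨n, hn⟩ := exists_integral_lt_of_tendsto_ae (v := fun x => (W x ⬝ᵥ x)⁻¹ • W x)
    (u := fun n x => (minDot V n x)⁻¹ • V (argminDot V n x))
    hccont hpmeas (fun x hx => (hppos x hx).le) hint
    (fun n => (measurable_argminDot_apply (f := fun k x => (V k ⬝ᵥ x)⁻¹ • V k)
      (fun k => by fun_prop) n).aemeasurable)
    (fun n x hx => inv_dotProduct_smul_apply_mem_Ioc (hVpos _) hx)
    (fun x hx => inv_dotProduct_smul_apply_mem_Ioc (fun i => ((hW x hx).2 i).1) hx) hlim hε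
  exact ⟨n, fun k => V k, fun k => hVpos k, _, _,
    fun x hx => inv_smul_mem_superdiff_minLogAffine hVpos hx,
    fun x hx => (hW x hx).1.inv_smul_mem_superdiff, hn⟩

/-- a bounded exponentially concave function can be approximated in the
weighted `H^{c,p}` (semi-)norm by minima of finitely many log-affine functions.
The a.e.-defined gradients are formalized as (existentially chosen) supergradient
selections `u` of `min_k log(w_kᵀ·)` and `v` of `φ`. -/
theorem statement9 {d : ℕ} (hd : 2 ≤ d)
    (φ : (Fin d → ℝ) → ℝ) (hφ : ExpConcave φ)
    (m M : ℝ) (hbound : ∀ x ∈ openSimplex d, m ≤ φ x ∧ φ x ≤ M)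
    (c : Fin d → Fin d → (Fin d → ℝ) → ℝ)
    (hccont : ∀ i j, ContinuousOn (c i j) (openSimplex d))
    (hcsymm : ∀ x ∈ openSimplex d, ∀ i j, c i j x = c j i x)
    (hcpsd : ∀ x ∈ openSimplex d, ∀ v : Fin d → ℝ,
      0 ≤ ∑ i, ∑ j, v i * c i j x * v j)
    (p : (Fin d → ℝ) → ℝ) (hpmeas : Measurable p)
    (hppos : ∀ x ∈ openSimplex d, 0 < p x)
    (hint : ∀ i j, IntegrableOn
      (fun x => |c i j x| / (x i * x j) * p x) (openSimplex d) (simplexMeasure d))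
    (ε : ℝ) (hε : 0 < ε) :
    ∃ (n : ℕ) (w : Fin (n + 1) → Fin d → ℝ), (∀ k i, 0 < w k i) ∧
      ∃ u v : (Fin d → ℝ) → Fin d → ℝ,
        (∀ x ∈ openSimplex d, u x ∈ superdiff (minLogAffine w) x) ∧
        (∀ x ∈ openSimplex d, v x ∈ superdiff φ x) ∧
        IntegrableOn
          (fun x => (∑ i, ∑ j, (u x i - v x i) * c i j x * (u x j - v x j)) * p x)
          (openSimplex d) (simplexMeasure d) ∧
        (∫ x in openSimplex d,
            (∑ i, ∑ j, (u x i - v x i) * c i j x * (u x j - v x j)) * p x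
            ∂(simplexMeasure d)) < ε :=
  statement9_general hd φ hφ m M hbound c hccont p hpmeas hppos hint ε hε
end
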